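/- Let γ, γ' ∈ (−1, 1) and λ₁, …, λ₉, λ'₁, …, λ'₉ be real numbers, and let f : ℝ² → ℝ be the polynomial f(x,y) = (1/3)(x − γy²)(x² − y⁴) + λ₁ + λ₂y + λ₃y² + λ₄y³ + λ₅y⁴ + λ₆x + λ₇xy + λ₈xy² + λ₉(x² − 3y⁴)y. Let G : ℝ² → ℝ² be the map G(x,y) = (ax + by + cy² + ξ, dy + η) with a > 0 and d > 0. If (f ∘ G)(x,y) = (1/3)(x − γ'y²)(x² − y⁴) + λ'₁ + λ'₂y + λ'₃y² + λ'₄y³ + λ'₅y⁴ + λ'₆x + λ'₇xy + λ'₈xy² + λ'₉(x² − 3y⁴)y for all (x,y) ∈ ℝ², then a = d = 1 and b = c = ξ = η = 0, i.e. G is the identity map (and consequently γ' = γ and λ'ᵢ = λᵢ for all i). -/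

import Mathlib

/-! Completing the cube in `x` writes every member of the family as
`(x + s(y))³/3 + p(y) (x + s(y)) + q(y)` with polynomials `s, p, q` of degrees `2, 4, 6`.
Comparing coefficients in `x` forces `a = 1` and leaves the identities
`s ∘ (dy + η) + (by + cy² + ξ) = s'`, `p ∘ (dy + η) = p'` and `q ∘ (dy + η) = q'`.
Their leading coefficients say that `(x, y) ↦ (x + cy², dy)` carries the quasihomogeneous part
`(x − γy²)(x² − y⁴)/3` to `(x − γ'y²)(x² − y⁴)/3`; as cubics in `x/y²` these have the ordered
roots `−d² − c < γd² − c < d² − c` and `−1 < γ' < 1`, which must agree, so `c = 0`, `d = 1`,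
`γ' = γ`. The next coefficients of `p` and `q` form a linear system in `η` and `λ'₉ − λ₉` with
determinant `432`, so both vanish, and then `b = ξ = 0`. -/

/-- The canonical versal deformation of the real singularity class `J₁₀³`:
`(1/3)(x − γy²)(x² − y⁴) + λ₁ + λ₂y + λ₃y² + λ₄y³ + λ₅y⁴ + λ₆x + λ₇xy + λ₈xy²
  + λ₉(x² − 3y⁴)y`. -/
noncomputable def vers3 (γ l1 l2 l3 l4 l5 l6 l7 l8 l9 x y : ℝ) : ℝ :=
  (1 / 3) * (x - γ * y ^ 2) * (x ^ 2 - y ^ 4) + l1 + l2 * y + l3 * y ^ 2 + l4 * y ^ 3 +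
      l5 * y ^ 4 + l6 * x + l7 * x * y + l8 * x * y ^ 2 + l9 * (x ^ 2 - 3 * y ^ 4) * y

open Polynomial

theorem eq_zero_of_forall_sum_mul_pow_eq_zero {R : Type*} [CommRing R] [IsDomain R] [CharZero R]
    {n : ℕ} {c : Fin n → R} (h : ∀ x : R, ∑ i, c i * x ^ (i : ℕ) = 0) : c = 0 :=
  Matrix.eq_zero_of_forall_index_sum_mul_pow_eq_zero (f := fun j : Fin n ↦ ((j : ℕ) : R))
    (fun _ _ hij ↦ Fin.ext (Nat.cast_injective hij)) fun _ ↦ h _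

theorem Polynomial.coeff_eq_of_forall_eval_affine {R : Type*} [CommRing R] [IsDomain R]
    [Infinite R] {P Q : R[X]} {n : ℕ} {d η : R} (hP : P.natDegree ≤ n + 1)
    (h : ∀ y, P.eval (d * y + η) = Q.eval y) :
    Q.coeff (n + 1) = P.coeff (n + 1) * d ^ (n + 1) ∧
      Q.coeff n = (P.coeff n + (n + 1) * η * P.coeff (n + 1)) * d ^ n := by
  have hQ : Q = (taylor η P).comp (C d * X) :=
    Polynomial.funext fun y ↦ by
      rw [eval_comp, taylor_eval, eval_mul, eval_C, eval_X]
      exact (h y).symm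
  have htop : (hasseDeriv (n + 1) P).natDegree ≤ 0 :=
    (natDegree_hasseDeriv_le P _).trans (by omega)
  have hnext : (hasseDeriv n P).natDegree ≤ 1 :=
    (natDegree_hasseDeriv_le P _).trans (by omega)
  rw [hQ, comp_C_mul_X_coeff, comp_C_mul_X_coeff, taylor_coeff, taylor_coeff,
    eq_C_of_natDegree_le_zero htop, eq_X_add_C_of_natDegree_le_one hnext]
  simp only [hasseDeriv_coeff, eval_C, eval_add, eval_mul, eval_X]
  rw [zero_add, zero_add, add_comm 1 n, Nat.choose_self, Nat.choose_self,
    Nat.choose_succ_self_right]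
  constructor <;> push_cast <;> ring

theorem eq_of_forall_depressed_cubic {K : Type*} [Field K] [LinearOrder K] [IsStrictOrderedRing K]
    {a u v α α' β β' : K} (ha : 0 < a)
    (h : ∀ x, (a * x + u) ^ 3 / 3 + α * (a * x + u) + β = (x + v) ^ 3 / 3 + α' * (x + v) + β') :
    a = 1 ∧ u = v ∧ α = α' ∧ β = β' := by
  have hc := eq_zero_of_forall_sum_mul_pow_eq_zero
    (c := ![u ^ 3 / 3 + α * u + β - v ^ 3 / 3 - α' * v - β', a * u ^ 2 + α * a - v ^ 2 - α',
      a ^ 2 * u - v, (a ^ 3 - 1) / 3])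
    fun x ↦ by
      simp only [Fin.sum_univ_four, Matrix.cons_val, Fin.coe_ofNat_eq_mod]
      linear_combination h x
  simp only [Matrix.cons_eq_zero_iff, Matrix.zero_empty, and_true] at hc
  obtain ⟨h0, h1, h2, h3⟩ := hc
  obtain rfl : a = 1 :=
    (pow_eq_one_iff_of_nonneg ha.le three_ne_zero).1 (by linear_combination 3 * h3)
  obtain rfl : u = v := by linear_combination h2
  exact ⟨rfl, rfl, by linear_combination h1, by linear_combination h0 - u * h1⟩

theorem eq_of_forall_cubic_eq {R : Type*} [CommRing R] [LinearOrder R] [IsStrictOrderedRing R]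
    {r₁ r₂ r₃ s₁ s₂ s₃ : R} (hr₁₂ : r₁ < r₂) (hr₂₃ : r₂ < r₃) (hs₁₂ : s₁ < s₂) (hs₂₃ : s₂ < s₃)
    (h : ∀ t, (t - r₁) * (t - r₂) * (t - r₃) = (t - s₁) * (t - s₂) * (t - s₃)) :
    r₁ = s₁ ∧ r₂ = s₂ ∧ r₃ = s₃ := by
  have root : ∀ s, (s - s₁) * (s - s₂) * (s - s₃) = 0 → s = r₁ ∨ s = r₂ ∨ s = r₃ := by
    intro s hs
    rw [← h] at hs
    rcases mul_eq_zero.1 hs with hs | hs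
    · rcases mul_eq_zero.1 hs with hs | hs
      · exact .inl (sub_eq_zero.1 hs)
      · exact .inr (.inl (sub_eq_zero.1 hs))
    · exact .inr (.inr (sub_eq_zero.1 hs))
  -- an increasing map from `{s₁, s₂, s₃}` to `{r₁, r₂, r₃}` is the order isomorphism
  rcases root s₁ (by ring) with h₁ | h₁ | h₁ <;> rcases root s₂ (by ring) with h₂ | h₂ | h₂ <;>
    rcases root s₃ (by ring) with h₃ | h₃ | h₃ <;>
    first
    | exact ⟨h₁.symm, h₂.symm, h₃.symm⟩
    | exfalso; subst_vars; order

theorem eq_of_quasihomogeneous_part_eq {γ γ' c d : ℝ} (hγ : γ ∈ Set.Ioo (-1 : ℝ) 1)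
    (hγ' : γ' ∈ Set.Ioo (-1 : ℝ) 1) (hd : 0 < d) (h₂ : γ' + 3 * c = γ * d ^ 2)
    (h₄ : 3 + γ' ^ 2 = (3 + γ ^ 2) * d ^ 4)
    (h₆ : γ' * (9 - γ' ^ 2) = γ * (9 - γ ^ 2) * d ^ 6) :
    d = 1 ∧ c = 0 ∧ γ' = γ := by
  obtain ⟨hγ₁, hγ₂⟩ := hγ
  obtain ⟨hγ₁', hγ₂'⟩ := hγ'
  have hd2 : 0 < d ^ 2 := by positivity
  -- with `u = c - γd²/3`, the left cubic is `(t + u)³ - (3 + γ²)d⁴(t + u)/3 + 2γ(9 - γ²)d⁶/27`,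
  -- and `h₂`, `h₄`, `h₆` match its three coefficients with those of the right one
  obtain ⟨e₁, e₂, e₃⟩ := eq_of_forall_cubic_eq (r₁ := -d ^ 2 - c) (r₂ := γ * d ^ 2 - c)
    (r₃ := d ^ 2 - c) (s₁ := -1) (s₂ := γ') (s₃ := 1) (by nlinarith) (by nlinarith)
    (by linarith) (by linarith) fun t ↦ by
      linear_combination
        (((t + c - γ * d ^ 2 / 3) ^ 2 + (t + c - γ * d ^ 2 / 3) * (t - γ' / 3) +
          (t - γ' / 3) ^ 2) / 3 - (3 + γ ^ 2) / 9 * d ^ 4) * h₂ +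
        (t - γ' / 3) / 3 * h₄ - 2 / 27 * h₆
  obtain rfl : c = 0 := by linarith
  obtain rfl : d = 1 := by nlinarith
  exact ⟨rfl, rfl, by linarith⟩

namespace vers3

/-! If `vers3 = x³/3 + s x² + p₁ x + p₀`, completing the cube gives `p = p₁ - s²` and
`q = p₀ - p₁ s + 2 s³/3`. -/

noncomputable def shift (γ l9 : ℝ) : ℝ[X] := C (-γ / 3) * X ^ 2 + C l9 * X

noncomputable def linCoeff (γ l6 l7 l8 l9 : ℝ) : ℝ[X] :=
  C (-(3 + γ ^ 2) / 9) * X ^ 4 + C (2 * γ * l9 / 3) * X ^ 3 + C (l8 - l9 ^ 2) * X ^ 2 +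
    C l7 * X + C l6

noncomputable def constCoeff (γ l1 l2 l3 l4 l5 l6 l7 l8 l9 : ℝ) : ℝ[X] :=
  C (2 * γ * (9 - γ ^ 2) / 81) * X ^ 6 + C (2 * (γ ^ 2 - 12) * l9 / 9) * X ^ 5 +
    C (l5 + γ * l8 / 3 - 2 * γ * l9 ^ 2 / 3) * X ^ 4 +
    C (l4 - l8 * l9 + γ * l7 / 3 + 2 * l9 ^ 3 / 3) * X ^ 3 +
    C (l3 - l7 * l9 + γ * l6 / 3) * X ^ 2 + C (l2 - l6 * l9) * X + C l1

theorem eq_depressed_cubic (γ l1 l2 l3 l4 l5 l6 l7 l8 l9 x y : ℝ) :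
    vers3 γ l1 l2 l3 l4 l5 l6 l7 l8 l9 x y =
      (x + (shift γ l9).eval y) ^ 3 / 3 +
        (linCoeff γ l6 l7 l8 l9).eval y * (x + (shift γ l9).eval y) +
        (constCoeff γ l1 l2 l3 l4 l5 l6 l7 l8 l9).eval y := by
  simp only [vers3, shift, linCoeff, constCoeff, eval_add, eval_mul, eval_C, eval_pow, eval_X]
  ring

theorem natDegree_shift_le (γ l9 : ℝ) : (shift γ l9).natDegree ≤ 2 := by
  unfold shift; compute_degree

theorem natDegree_linCoeff_le (γ l6 l7 l8 l9 : ℝ) : (linCoeff γ l6 l7 l8 l9).natDegree ≤ 4 := by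
  unfold linCoeff; compute_degree

theorem natDegree_constCoeff_le (γ l1 l2 l3 l4 l5 l6 l7 l8 l9 : ℝ) :
    (constCoeff γ l1 l2 l3 l4 l5 l6 l7 l8 l9).natDegree ≤ 6 := by
  unfold constCoeff; compute_degree

variable {γ l1 l2 l3 l4 l5 l6 l7 l8 l9 γ' l1' l2' l3' l4' l5' l6' l7' l8' l9' a b c d ξ η : ℝ}

theorem eqs_of_comp_eq (ha : 0 < a)
    (h : ∀ x y, vers3 γ l1 l2 l3 l4 l5 l6 l7 l8 l9 (a * x + b * y + c * y ^ 2 + ξ) (d * y + η) =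
      vers3 γ' l1' l2' l3' l4' l5' l6' l7' l8' l9' x y) :
    a = 1 ∧ ∀ y, b * y + c * y ^ 2 + ξ + (shift γ l9).eval (d * y + η) = (shift γ' l9').eval y ∧
      (linCoeff γ l6 l7 l8 l9).eval (d * y + η) = (linCoeff γ' l6' l7' l8' l9').eval y ∧
      (constCoeff γ l1 l2 l3 l4 l5 l6 l7 l8 l9).eval (d * y + η) =
        (constCoeff γ' l1' l2' l3' l4' l5' l6' l7' l8' l9').eval y := by
  have key := fun y ↦ eq_of_forall_depressed_cubic ha
    (u := b * y + c * y ^ 2 + ξ + (shift γ l9).eval (d * y + η)) (v := (shift γ' l9').eval y)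
    (α := (linCoeff γ l6 l7 l8 l9).eval (d * y + η)) (α' := (linCoeff γ' l6' l7' l8' l9').eval y)
    (β := (constCoeff γ l1 l2 l3 l4 l5 l6 l7 l8 l9).eval (d * y + η))
    (β' := (constCoeff γ' l1' l2' l3' l4' l5' l6' l7' l8' l9').eval y)
    fun x ↦ by
      have := h x y
      rw [eq_depressed_cubic, eq_depressed_cubic] at this
      linear_combination this
  exact ⟨(key 0).1, fun y ↦ (key y).2⟩

theorem coordChange_eq_id_of_comp_eq (ha : 0 < a) (hd : 0 < d)
    (hγ : γ ∈ Set.Ioo (-1 : ℝ) 1) (hγ' : γ' ∈ Set.Ioo (-1 : ℝ) 1)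
    (h : ∀ x y, vers3 γ l1 l2 l3 l4 l5 l6 l7 l8 l9 (a * x + b * y + c * y ^ 2 + ξ) (d * y + η) =
      vers3 γ' l1' l2' l3' l4' l5' l6' l7' l8' l9' x y) :
    a = 1 ∧ d = 1 ∧ b = 0 ∧ c = 0 ∧ ξ = 0 ∧ η = 0 := by
  obtain ⟨rfl, hy⟩ := eqs_of_comp_eq ha h
  obtain ⟨e₂, e₁⟩ := coeff_eq_of_forall_eval_affine (n := 1) (natDegree_shift_le γ l9)
    (Q := shift γ' l9' - (C c * X ^ 2 + C b * X + C ξ)) fun y ↦ by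
      simp only [eval_sub, eval_add, eval_mul, eval_C, eval_pow, eval_X]
      linarith [(hy y).1]
  obtain ⟨e₄, e₃⟩ := coeff_eq_of_forall_eval_affine (n := 3) (natDegree_linCoeff_le γ l6 l7 l8 l9)
    fun y ↦ (hy y).2.1
  obtain ⟨e₆, e₅⟩ := coeff_eq_of_forall_eval_affine (n := 5)
    (natDegree_constCoeff_le γ l1 l2 l3 l4 l5 l6 l7 l8 l9) fun y ↦ (hy y).2.2
  simp only [shift, linCoeff, constCoeff, coeff_add, coeff_sub, coeff_C_mul_X_pow, coeff_C_mul_X,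
    coeff_C] at e₁ e₂ e₃ e₄ e₅ e₆
  norm_num at e₁ e₂ e₃ e₄ e₅ e₆
  obtain ⟨rfl, rfl, hγγ⟩ : d = 1 ∧ c = 0 ∧ γ' = γ := eq_of_quasihomogeneous_part_eq hγ hγ' hd
    (by linear_combination -3 * e₂) (by linear_combination -9 * e₄)
    (by linear_combination 81 / 2 * e₆)
  subst γ'
  -- `e₃`, `e₅` are a linear system in `η` and `l9' - l9` with determinant `432`
  obtain rfl : l9' = l9 := by
    linear_combination (-54 * (3 + γ ^ 2) * e₅ - 9 * (18 * γ - 2 * γ ^ 3) * e₃) / 432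
  obtain rfl : η = 0 := by
    linear_combination (9 * (36 - 3 * γ ^ 2) * e₃ + 81 * γ * e₅) / 432
  obtain rfl : b = 0 := by linear_combination -e₁
  have hξ := (hy 0).1
  simp only [shift, eval_add, eval_mul, eval_C, eval_pow, eval_X] at hξ
  exact ⟨rfl, rfl, rfl, rfl, by linarith, rfl⟩

theorem params_eq_of_forall_eq
    (h : ∀ x y, vers3 γ l1 l2 l3 l4 l5 l6 l7 l8 l9 x y =
      vers3 γ' l1' l2' l3' l4' l5' l6' l7' l8' l9' x y) :
    γ' = γ ∧ l1' = l1 ∧ l2' = l2 ∧ l3' = l3 ∧ l4' = l4 ∧ l5' = l5 ∧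
      l6' = l6 ∧ l7' = l7 ∧ l8' = l8 ∧ l9' = l9 := by
  obtain ⟨-, hy⟩ := eqs_of_comp_eq (a := 1) (b := 0) (c := 0) (d := 1) (ξ := 0) (η := 0) one_pos
    (by simpa using h)
  have hs : shift γ l9 = shift γ' l9' := Polynomial.funext fun y ↦ by simpa using (hy y).1
  have hl : linCoeff γ l6 l7 l8 l9 = linCoeff γ' l6' l7' l8' l9' :=
    Polynomial.funext fun y ↦ by simpa using (hy y).2.1
  have hq : constCoeff γ l1 l2 l3 l4 l5 l6 l7 l8 l9 =
      constCoeff γ' l1' l2' l3' l4' l5' l6' l7' l8' l9' :=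
    Polynomial.funext fun y ↦ by simpa using (hy y).2.2
  rw [Polynomial.ext_iff] at hs hl hq
  have s₁ := hs 1; have s₂ := hs 2
  have p₀ := hl 0; have p₁ := hl 1; have p₂ := hl 2
  have q₀ := hq 0; have q₁ := hq 1; have q₂ := hq 2; have q₃ := hq 3; have q₄ := hq 4
  simp only [shift, linCoeff, constCoeff, coeff_add, coeff_C_mul_X_pow, coeff_C_mul_X, coeff_C]
    at s₁ s₂ p₀ p₁ p₂ q₀ q₁ q₂ q₃ q₄
  norm_num at s₁ s₂ p₀ p₁ p₂ q₀ q₁ q₂ q₃ q₄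
  subst s₁ s₂ p₀ p₁ q₀
  obtain rfl : l8' = l8 := by linarith
  refine ⟨rfl, rfl, by linarith, by linarith, by linarith, by linarith, rfl, rfl, rfl, rfl⟩

end vers3

/-- If a coordinate change `G(x,y) = (ax + by + cy² + ξ, dy + η)` with `a > 0`, `d > 0`
maps one member of the canonical versal deformation of `J₁₀³` (with `γ, γ' ∈ (−1,1)`)
to another, then `G` is the identity map, and the parameters coincide. -/
theorem vers3_orbit_unique
    (γ l1 l2 l3 l4 l5 l6 l7 l8 l9 : ℝ)
    (γ' l1' l2' l3' l4' l5' l6' l7' l8' l9' : ℝ)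
    (hγ : γ ∈ Set.Ioo (-1 : ℝ) 1) (hγ' : γ' ∈ Set.Ioo (-1 : ℝ) 1)
    (a b c d ξ η : ℝ) (ha : 0 < a) (hd : 0 < d)
    (h : ∀ x y : ℝ,
      vers3 γ l1 l2 l3 l4 l5 l6 l7 l8 l9 (a * x + b * y + c * y ^ 2 + ξ) (d * y + η)
        = vers3 γ' l1' l2' l3' l4' l5' l6' l7' l8' l9' x y) :
    a = 1 ∧ d = 1 ∧ b = 0 ∧ c = 0 ∧ ξ = 0 ∧ η = 0 ∧
      (∀ x y : ℝ, (a * x + b * y + c * y ^ 2 + ξ, d * y + η) = (x, y)) ∧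
      γ' = γ ∧ l1' = l1 ∧ l2' = l2 ∧ l3' = l3 ∧ l4' = l4 ∧ l5' = l5 ∧
      l6' = l6 ∧ l7' = l7 ∧ l8' = l8 ∧ l9' = l9 := by
  obtain ⟨rfl, rfl, rfl, rfl, rfl, rfl⟩ := vers3.coordChange_eq_id_of_comp_eq ha hd hγ hγ' h
  exact ⟨rfl, rfl, rfl, rfl, rfl, rfl, fun x y ↦ by simp,
    vers3.params_eq_of_forall_eq fun x y ↦ by simpa using h x y⟩
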